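/- Let p be a prime and let K = K_0 ⊂ K_1 ⊂ ⋯ ⊂ K_n be a sufficiently ramified tower of local fields of characteristic (0,p); assume moreover that K_n/K is Galois with Gal(K_n/K) cyclic of order p^n generated by σ, and that K_m is the fixed field of σ^{p^m} for each 0 ≤ m ≤ n. Let t = p^{−n}·tr_{K_n/K} and K_n^{t=0} = {x ∈ K_n : t(x) = 0}. Let λ ∈ ℤ_p (viewed in K) with v(λ − 1) ≥ 2. Then the K-linear operator σ − λ maps K_n^{t=0} bijectively onto itself, and for every y ∈ K_n^{t=0} the unique x ∈ K_n^{t=0} with σ(x) − λx = y satisfies v(x) ≥ v(y) − 1 − 1/(p(p−1)). -/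

import Mathlib

/-- Data exhibiting `L` as a local field of characteristic `(0, p)`: a multiplicative
nonarchimedean absolute value `a` (representing the absolute valuation `v` via
`a x = c ^ v x` for a base `0 < c < 1`), a uniformizer `ϖ` generating the (discrete)
value group, residue characteristic `p` (`a p < 1`), completeness, and perfectness of
the residue field (surjectivity of the `p`-power map on residues). -/
structure LocalFieldData (p : ℕ) (L : Type*) [Field L] where
  a : L → ℝ
  a_zero : a 0 = 0
  a_pos : ∀ x : L, x ≠ 0 → 0 < a x
  a_mul : ∀ x y : L, a (x * y) = a x * a y
  a_add : ∀ x y : L, a (x + y) ≤ max (a x) (a y)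
  ϖ : L
  ϖ_pos : 0 < a ϖ
  ϖ_lt_one : a ϖ < 1
  disc : ∀ x : L, x ≠ 0 → ∃ k : ℤ, a x = a ϖ ^ k
  res_char : a (p : L) < 1
  complete : ∀ u : ℕ → L,
    (∀ ε : ℝ, 0 < ε → ∃ N : ℕ, ∀ m ≥ N, ∀ n ≥ N, a (u m - u n) < ε) →
    ∃ l : L, ∀ ε : ℝ, 0 < ε → ∃ N : ℕ, ∀ n ≥ N, a (u n - l) < ε
  perfect_res : ∀ x : L, a x ≤ 1 → ∃ y : L, a y ≤ 1 ∧ a (x - y ^ p) < 1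

/-- The normalized trace `t = p⁻ⁿ · tr_{K_n/K}` for a Galois extension `L = K_n` of `K`
whose Galois group is cyclic of order `pⁿ` generated by `σ`:
`t x = p⁻ⁿ ∑_{j < pⁿ} σʲ x`. -/
noncomputable def normTrace (p n : ℕ) {K L : Type*} [Field K] [Field L] [Algebra K L]
    (σ : L ≃ₐ[K] L) (x : L) : L :=
  ((p : L) ^ n)⁻¹ * ∑ j ∈ Finset.range (p ^ n), (σ ^ j) x

/-!
Write `t_m = p^{m-n} tr_{K_n/K_m}`, so that `t_0 = t`, `t_n = id` and
`t_m = p⁻¹ tr_{K_{m+1}/K_m} ∘ t_{m+1}`. The bound on the different gives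
`|tr_{K_{m+1}/K_m} w| ≤ |p|^{1 - p^{-(m+1)}} |w|`, hence `|t_m z| ≤ |p|^{-1/(p(p-1))} |z|`
for `m ≥ 1`.
If `t x = 0`, then `x = ∑_{m<n} (t_{m+1} x - t_m x)`; each summand `z` has trace `0` to `K_m`, so
`|p z| ≤ |σ z - z|`, and `σ z - z = (t_{m+1} - t_m)(σ x - x)`. Thus
`|x| ≤ |p|^{-1-1/(p(p-1))} |σ x - x|`. Since `|λ - 1| ≤ |p|²`, the difference between `σ - 1` and
`σ - λ` is absorbed, which gives the estimate and the injectivity of `σ - λ` on `K_n^{t=0}`;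
surjectivity follows in finite dimension.
-/

open Finset

namespace LocalFieldData

variable {p : ℕ} {L : Type*} [Field L] (D : LocalFieldData p L)

lemma a_nonneg (x : L) : 0 ≤ D.a x := by
  rcases eq_or_ne x 0 with rfl | hx
  · exact D.a_zero.ge
  · exact (D.a_pos x hx).le

def abv : AbsoluteValue L ℝ where
  toFun := D.a
  map_mul' := D.a_mul
  nonneg' := D.a_nonneg
  eq_zero' x := ⟨fun h => by_contra fun hx => (D.a_pos x hx).ne' h, fun h => h ▸ D.a_zero⟩
  add_le' _ _ := IsNonarchimedean.add_le D.a_nonneg D.a_add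

lemma isNonarchimedean_abv : IsNonarchimedean D.abv := D.a_add

end LocalFieldData

lemma Finset.sum_range_mul_eq_sum_sum {M : Type*} [AddCommMonoid M] (f : ℕ → M) (a b : ℕ) :
    ∑ j ∈ range (a * b), f j = ∑ i ∈ range a, ∑ k ∈ range b, f (i + a * k) := by
  induction b with
  | zero => simp
  | succ b ih =>
    rw [Nat.mul_succ, sum_range_add, ih, ← sum_add_distrib]
    refine sum_congr rfl fun i _ => ?_
    rw [sum_range_succ, add_comm i]

lemma IsNonarchimedean.apply_sum_le_of_forall_le {R ι : Type*} [Semiring R]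
    {v : AbsoluteValue R ℝ} (hv : IsNonarchimedean v) {s : Finset ι} {f : ι → R} {C : ℝ}
    (hC : 0 ≤ C) (h : ∀ i ∈ s, v (f i) ≤ C) : v (∑ i ∈ s, f i) ≤ C :=
  Finset.sum_induction f (fun x => v x ≤ C) (fun _ _ ha hb => (hv _ _).trans (max_le ha hb))
    (by simpa using hC) h

lemma IsNonarchimedean.apply_sub_le {R : Type*} [Ring R] {v : AbsoluteValue R ℝ}
    (hv : IsNonarchimedean v) (a b : R) : v (a - b) ≤ max (v a) (v b) := by
  simpa [sub_eq_add_neg] using hv a (-b)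

lemma le_mul_of_le_mul_max {a b b' C μ : ℝ} (hb : 0 ≤ b) (hC : 0 ≤ C)
    (hCμ : C * μ < 1) (h : a ≤ C * b') (hb' : b' ≤ max b (μ * a)) : a ≤ C * b := by
  rcases le_max_iff.mp hb' with hb' | hb'
  · exact h.trans (by gcongr)
  · nlinarith [mul_le_mul_of_nonneg_left hb' hC, mul_nonneg hC hb]

lemma abv_le_of_abv_le_abv_sub {R : Type*} [CommRing R] {v : AbsoluteValue R ℝ}
    (hv : IsNonarchimedean v) {C μ : ℝ} (hC : 0 ≤ C) (hCμ : C * μ < 1) {x u l : R}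
    (hx : v x ≤ C * v (u - x)) (hl : v (l - 1) ≤ μ) : v x ≤ C * v (u - l * x) := by
  have hsub : u - x = (u - l * x) + (l - 1) * x := by ring
  refine le_mul_of_le_mul_max (v.nonneg _) hC hCμ hx ?_
  rw [hsub]
  refine (hv _ _).trans (max_le_max le_rfl ?_)
  rw [map_mul]
  exact mul_le_mul_of_nonneg_right hl (v.nonneg x)

lemma pow_pow_eq_of_forall_pred_eq_pow {M : Type*} [Monoid M] {a : ℕ → M} {p n : ℕ}
    (h : ∀ m, 1 ≤ m → m ≤ n → a (m - 1) = a m ^ p) {m : ℕ} (hm : m ≤ n) :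
    a 0 = a m ^ p ^ m := by
  induction m with
  | zero => simp
  | succ m ih =>
    have hstep := h (m + 1) (by omega) hm
    rw [Nat.add_sub_cancel] at hstep
    rw [ih (by omega), hstep, ← pow_mul, pow_succ']

lemma zpow_le_rpow_one_sub_inv {a P : ℝ} {e N : ℕ} {d : ℤ} (ha0 : 0 < a) (ha1 : a ≤ 1)
    (hN : N ≠ 0) (hP : P = a ^ (N * e)) (hd : (e : ℝ) * (N - 1) ≤ d) :
    a ^ d ≤ P ^ (1 - 1 / N : ℝ) := by
  have hexp : ((N * e : ℕ) : ℝ) * (1 - 1 / N) = e * (N - 1) := by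
    push_cast
    field_simp
  rw [hP, ← Real.rpow_natCast, ← Real.rpow_mul ha0.le, ← Real.rpow_intCast, hexp]
  exact Real.rpow_le_rpow_of_exponent_ge ha0 ha1 hd

theorem LinearMap.existsUnique_apply_eq_of_mapsTo {K V : Type*} [Field K] [AddCommGroup V]
    [Module K V] [FiniteDimensional K V] (f : V →ₗ[K] V) {W : Submodule K V}
    (hW : ∀ x ∈ W, f x ∈ W) (hinj : ∀ x ∈ W, f x = 0 → x = 0) {y : V} (hy : y ∈ W) :
    ∃! x, x ∈ W ∧ f x = y := by
  have hsurj : Function.Surjective (f.restrict hW) := by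
    refine LinearMap.injective_iff_surjective.mp ((injective_iff_map_eq_zero _).mpr ?_)
    exact fun x hx => Subtype.ext (hinj x x.2 (congrArg Subtype.val hx))
  obtain ⟨x, hx⟩ := hsurj ⟨y, hy⟩
  have hfx : f x = y := congrArg Subtype.val hx
  refine ⟨x, ⟨x.2, hfx⟩, fun x' ⟨hx'W, hfx'⟩ => ?_⟩
  rw [← sub_eq_zero]
  exact hinj _ (W.sub_mem hx'W x.2) (by rw [map_sub, hfx, hfx', sub_self])

section OrbitTrace

variable {K L : Type*} [CommSemiring K] [CommRing L] [Algebra K L]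

lemma AlgEquiv.pow_apply_eq_self {τ : L ≃ₐ[K] L} {x : L} (hx : τ x = x) (j : ℕ) :
    (τ ^ j) x = x := by
  rw [AlgEquiv.coe_pow]
  exact Function.IsFixedPt.iterate hx j

/-- The trace over the subgroup generated by `σ ^ c`, when that subgroup has order `N`. -/
def orbitTrace (σ : L ≃ₐ[K] L) (c N : ℕ) : L →ₗ[K] L :=
  ∑ j ∈ range N, (σ ^ (c * j)).toLinearMap

variable (σ : L ≃ₐ[K] L) {c N : ℕ}

lemma orbitTrace_apply (x : L) : orbitTrace σ c N x = ∑ j ∈ range N, (σ ^ (c * j)) x := by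
  simp [orbitTrace]

lemma orbitTrace_map (x : L) : orbitTrace σ c N (σ x) = σ (orbitTrace σ c N x) := by
  simp only [orbitTrace_apply, map_sum, ← AlgEquiv.mul_apply, ← pow_succ, ← pow_succ']

lemma orbitTrace_mul_of_pow_apply_eq_self {y : L} (hy : (σ ^ c) y = y) (x : L) :
    orbitTrace σ c N (x * y) = orbitTrace σ c N x * y := by
  simp only [orbitTrace_apply, map_mul, pow_mul, AlgEquiv.pow_apply_eq_self hy, sum_mul]

lemma orbitTrace_of_pow_apply_eq_self {x : L} (hx : (σ ^ c) x = x) :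
    orbitTrace σ c N x = N * x := by
  simp [orbitTrace_apply, pow_mul, AlgEquiv.pow_apply_eq_self hx]

lemma pow_apply_orbitTrace (h : σ ^ (c * N) = 1) (x : L) :
    (σ ^ c) (orbitTrace σ c N x) = orbitTrace σ c N x := by
  have hshift := (sum_range_succ' (fun j => (σ ^ (c * j)) x) N).symm.trans (sum_range_succ _ N)
  simp only [h, mul_zero, pow_zero, AlgEquiv.one_apply, add_left_inj] at hshift
  rw [orbitTrace_apply, map_sum, ← hshift]
  refine sum_congr rfl fun j _ => ?_
  rw [← AlgEquiv.mul_apply, ← pow_add, mul_add_one, add_comm]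

lemma orbitTrace_mul_apply (a b : ℕ) (x : L) :
    orbitTrace σ c (a * b) x = orbitTrace σ c a (orbitTrace σ (c * a) b x) := by
  simp only [orbitTrace_apply, map_sum, ← AlgEquiv.mul_apply, ← pow_add,
    sum_range_mul_eq_sum_sum, mul_add, mul_assoc]
  rw [Finset.sum_comm]

end OrbitTrace

section Isometry

variable {K L : Type*} [CommSemiring K] [CommRing L] [Algebra K L] {v : AbsoluteValue L ℝ}
  {σ : L ≃ₐ[K] L}

lemma abv_pow_apply (hσ : ∀ x, v (σ x) = v x) (k : ℕ) (x : L) : v ((σ ^ k) x) = v x := by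
  induction k with
  | zero => rfl
  | succ k ih => rw [pow_succ', AlgEquiv.mul_apply, hσ, ih]

lemma abv_pow_apply_sub_le (hv : IsNonarchimedean v) (hσ : ∀ x, v (σ x) = v x) (k : ℕ)
    (z : L) : v ((σ ^ k) z - z) ≤ v (σ z - z) := by
  induction k with
  | zero => simp
  | succ k ih =>
    have hsplit : (σ ^ (k + 1)) z - z = (σ ^ k) (σ z - z) + ((σ ^ k) z - z) := by
      rw [map_sub, pow_succ, AlgEquiv.mul_apply]
      ring
    rw [hsplit]
    exact (hv _ _).trans (max_le (abv_pow_apply hσ k _).le ih)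

/-- `N z = -∑_{j<N} (σ^{cj} z - z)`, and each summand is no larger than `σ z - z`. -/
lemma abv_natCast_mul_le_of_orbitTrace_eq_zero (hv : IsNonarchimedean v)
    (hσ : ∀ x, v (σ x) = v x) {c N : ℕ} {z : L} (hz : orbitTrace σ c N z = 0) :
    v (N * z) ≤ v (σ z - z) := by
  have hNz : (N : L) * z = -∑ j ∈ range N, ((σ ^ (c * j)) z - z) := by
    rw [sum_sub_distrib, ← orbitTrace_apply, hz]
    simp
  rw [hNz, AbsoluteValue.map_neg]
  exact hv.apply_sum_le_of_forall_le (v.nonneg _)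
    fun j _ => abv_pow_apply_sub_le hv hσ (c * j) z

end Isometry

/-- `hdiff` says that `π^{-d}` generates the inverse different of `E = L^{σ^{cr}}` over
`F = L^{σ^c}`, and `hdisc` that `π` is a uniformizer of `E`. -/
theorem abv_orbitTrace_le_of_inverseDifferent {K L : Type*} [CommSemiring K] [Field L]
    [Algebra K L] (v : AbsoluteValue L ℝ) (σ : L ≃ₐ[K] L) {c r : ℕ} (hr : 0 < r) {π ϖ : L}
    {d : ℤ} (hπ0 : 0 < v π) (hπ1 : v π < 1)
    (hdisc : ∀ x, (σ ^ (c * r)) x = x → x ≠ 0 → ∃ k : ℤ, v x = v π ^ k)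
    (hϖ : (σ ^ c) ϖ = ϖ) (hvϖ : v ϖ = v π ^ r)
    (hdiff : ∀ x, (σ ^ (c * r)) x = x → v x ≤ v π ^ (-d) → v (orbitTrace σ c r x) ≤ 1)
    {w : L} (hw : (σ ^ (c * r)) w = w) :
    v (orbitTrace σ c r w) ≤ v π ^ (d - (r - 1)) * v w := by
  rcases eq_or_ne w 0 with rfl | hw0
  · simp
  obtain ⟨i, hi⟩ := hdisc w hw hw0
  -- `ϖ ^ k` is the smallest power of `ϖ` moving `w` into the inverse different
  set k : ℤ := -((d + i) / r)
  have hk : -(d + i) ≤ r * k ∧ r * k ≤ -(d + i) + (r - 1) := by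
    have hdiv := Int.emod_add_mul_ediv (d + i) r
    have hmod0 := Int.emod_nonneg (d + i) (Int.natCast_ne_zero.mpr hr.ne')
    have hmod1 := Int.emod_lt_of_pos (d + i) (Int.natCast_pos.mpr hr)
    simp only [k, mul_neg]
    constructor <;> linarith
  have hfix : (σ ^ c) (ϖ ^ k) = ϖ ^ k := by rw [map_zpow₀, hϖ]
  have hvk : v (ϖ ^ k) = v π ^ (r * k) := by
    rw [map_zpow₀, hvϖ, ← zpow_natCast, ← zpow_mul]
  have hmem : (σ ^ (c * r)) (w * ϖ ^ k) = w * ϖ ^ k := by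
    rw [map_mul, hw, pow_mul, AlgEquiv.pow_apply_eq_self hfix]
  have hscaled := hdiff _ hmem <| by
    rw [map_mul, hi, hvk, ← zpow_add₀ hπ0.ne']
    exact zpow_le_zpow_right_of_le_one₀ hπ0 hπ1.le (by linarith)
  rw [orbitTrace_mul_of_pow_apply_eq_self σ hfix, map_mul, hvk] at hscaled
  calc v (orbitTrace σ c r w) ≤ v π ^ (-(r * k)) := by
        rw [zpow_neg, ← one_div, le_div_iff₀ (zpow_pos hπ0 _)]
        exact hscaled
    _ ≤ v π ^ (d - (r - 1) + i) := zpow_le_zpow_right_of_le_one₀ hπ0 hπ1.le (by linarith)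
    _ = v π ^ (d - (r - 1)) * v w := by rw [zpow_add₀ hπ0.ne', hi]

theorem abv_orbitTrace_le_of_tower {K L : Type*} [CommSemiring K] [Field L] [Algebra K L]
    (v : AbsoluteValue L ℝ) (σ : L ≃ₐ[K] L) {p n e : ℕ} (hp : 0 < p) (ϖ : ℕ → L)
    (hϖmem : ∀ m ≤ n, (σ ^ p ^ m) (ϖ m) = ϖ m)
    (hϖpos : ∀ m ≤ n, 0 < v (ϖ m)) (hϖ1 : ∀ m ≤ n, v (ϖ m) < 1)
    (hdisc : ∀ m ≤ n, ∀ x, (σ ^ p ^ m) x = x → x ≠ 0 → ∃ k : ℤ, v x = v (ϖ m) ^ k)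
    (he : v p = v (ϖ 0) ^ e) (htot : ∀ m, 1 ≤ m → m ≤ n → v (ϖ (m - 1)) = v (ϖ m) ^ p)
    (hdiff : ∀ m, 1 ≤ m → m ≤ n → ∃ dd : ℕ, (e : ℝ) * ((p : ℝ) ^ m - 1) + (p - 1) ≤ dd ∧
      ∀ x, (σ ^ p ^ m) x = x → v x ≤ v (ϖ m) ^ (-(dd : ℤ)) →
        v (orbitTrace σ (p ^ (m - 1)) p x) ≤ 1)
    {k : ℕ} (hk : k < n) {w : L} (hw : (σ ^ p ^ (k + 1)) w = w) :
    v (orbitTrace σ (p ^ k) p w) ≤ v p ^ (1 - 1 / (p : ℝ) ^ (k + 1)) * v w := by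
  obtain ⟨dd, hdd, hdiffk⟩ := hdiff (k + 1) k.succ_pos hk
  have hvp : v p = v (ϖ (k + 1)) ^ (p ^ (k + 1) * e) := by
    rw [pow_mul, ← pow_pow_eq_of_forall_pred_eq_pow (a := fun m => v (ϖ m)) htot hk, he]
  refine (abv_orbitTrace_le_of_inverseDifferent v σ hp (hϖpos _ hk) (hϖ1 _ hk) (hdisc _ hk)
    (hϖmem k hk.le) (htot (k + 1) k.succ_pos hk) (hdiffk · ·) hw).trans ?_
  gcongr
  exact_mod_cast zpow_le_rpow_one_sub_inv (hϖpos _ hk) (hϖ1 _ hk).le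
    (pow_ne_zero _ hp.ne') hvp (by push_cast; linarith)

section LevelTrace

variable {K L : Type*} [CommSemiring K] [Field L] [Algebra K L]

/-- `p^{-(n-m)} tr_{K_n/K_m}`, where `K_m` is the fixed field of `σ ^ p ^ m`. -/
def levelTrace (p n : ℕ) (σ : L ≃ₐ[K] L) (m : ℕ) : L →ₗ[K] L :=
  LinearMap.mulLeft K ((p : L) ^ (n - m))⁻¹ ∘ₗ orbitTrace σ (p ^ m) (p ^ (n - m))

variable {p n : ℕ} (σ : L ≃ₐ[K] L)

lemma levelTrace_apply (m : ℕ) (x : L) :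
    levelTrace p n σ m x = ((p : L) ^ (n - m))⁻¹ * orbitTrace σ (p ^ m) (p ^ (n - m)) x :=
  rfl

lemma levelTrace_self_apply (x : L) : levelTrace p n σ n x = x := by
  simp [levelTrace_apply, orbitTrace_apply]

lemma levelTrace_map (m : ℕ) (x : L) : levelTrace p n σ m (σ x) = σ (levelTrace p n σ m x) := by
  simp only [levelTrace_apply, orbitTrace_map, map_mul, map_inv₀, map_pow, map_natCast]

lemma pow_apply_levelTrace (hσ : σ ^ p ^ n = 1) {m : ℕ} (hm : m ≤ n) (x : L) :
    (σ ^ p ^ m) (levelTrace p n σ m x) = levelTrace p n σ m x := by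
  rw [levelTrace_apply, map_mul, map_inv₀, map_pow, map_natCast, pow_apply_orbitTrace]
  rwa [← pow_add, Nat.add_sub_cancel' hm]

lemma orbitTrace_levelTrace_succ (hp : (p : L) ≠ 0) {m : ℕ} (hm : m < n) (x : L) :
    orbitTrace σ (p ^ m) p (levelTrace p n σ (m + 1) x) = p * levelTrace p n σ m x := by
  have hnm : n - m = n - (m + 1) + 1 := by omega
  rw [levelTrace_apply, levelTrace_apply, mul_comm, orbitTrace_mul_of_pow_apply_eq_self σ
      (by rw [map_inv₀, map_pow, map_natCast]),
    pow_succ p m, ← orbitTrace_mul_apply, hnm, pow_succ' p, pow_succ' (p : L)]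
  field_simp

end LevelTrace

lemma levelTrace_zero_apply {p n : ℕ} {K L : Type*} [Field K] [Field L] [Algebra K L]
    (σ : L ≃ₐ[K] L) (x : L) : levelTrace p n σ 0 x = normTrace p n σ x := by
  simp [levelTrace_apply, orbitTrace_apply, normTrace]

lemma normTrace_sub_algebraMap_mul {K L : Type*} [Field K] [Field L] [Algebra K L]
    {p n : ℕ} (σ : L ≃ₐ[K] L) (lam : K) (x : L) :
    normTrace p n σ (σ x - algebraMap K L lam * x) =
      σ (normTrace p n σ x) - algebraMap K L lam * normTrace p n σ x := by
  simp only [← levelTrace_zero_apply, ← Algebra.smul_def, map_sub, map_smul, levelTrace_map]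

section Estimates

variable {K L : Type*} [CommSemiring K] [Field L] [Algebra K L] {v : AbsoluteValue L ℝ}
  {σ : L ≃ₐ[K] L} {p n : ℕ}

/-- The exponent is `∑_{j > m} p^{-j} = 1 / (p^m (p - 1))`. -/
lemma abv_levelTrace_le (hp : 1 < p) (hp0 : (p : L) ≠ 0) (hvp : v p ≤ 1) (hσ : σ ^ p ^ n = 1)
    (hstep : ∀ k < n, ∀ w, (σ ^ p ^ (k + 1)) w = w →
      v (orbitTrace σ (p ^ k) p w) ≤ v p ^ (1 - 1 / (p : ℝ) ^ (k + 1)) * v w)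
    (z : L) {m : ℕ} (hm : m ≤ n) :
    v (levelTrace p n σ m z) ≤ v p ^ (-(1 / ((p : ℝ) ^ m * (p - 1)))) * v z := by
  have hvp0 : 0 < v p := v.pos hp0
  have hp1 : (1 : ℝ) < p := by exact_mod_cast hp
  induction hm using Nat.decreasingInduction with
  | self =>
    rw [levelTrace_self_apply]
    exact le_mul_of_one_le_left (v.nonneg z) (Real.one_le_rpow_of_pos_of_le_one_of_nonpos hvp0
      hvp (neg_nonpos.mpr (by have := sub_pos.mpr hp1; positivity)))
  | of_succ k hk ih =>
    have htk : levelTrace p n σ k z =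
        (p : L)⁻¹ * orbitTrace σ (p ^ k) p (levelTrace p n σ (k + 1) z) := by
      rw [orbitTrace_levelTrace_succ σ hp0 hk]
      field_simp
    calc v (levelTrace p n σ k z)
        = (v p)⁻¹ * v (orbitTrace σ (p ^ k) p (levelTrace p n σ (k + 1) z)) := by
          rw [htk, map_mul, map_inv₀]
      _ ≤ (v p)⁻¹ * (v p ^ (1 - 1 / (p : ℝ) ^ (k + 1)) *
            (v p ^ (-(1 / ((p : ℝ) ^ (k + 1) * (p - 1)))) * v z)) := by
          gcongr
          exact (hstep k hk _ (pow_apply_levelTrace σ hσ hk z)).trans (by gcongr)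
      _ = v p ^ (-(1 / ((p : ℝ) ^ k * (p - 1)))) * v z := by
          rw [← mul_assoc, ← mul_assoc, ← Real.rpow_neg_one, ← Real.rpow_add hvp0,
            ← Real.rpow_add hvp0]
          have hp1' : (p : ℝ) - 1 ≠ 0 := (sub_pos.mpr hp1).ne'
          congr 2
          field_simp
          ring

lemma abv_natCast_mul_le_of_levelTrace_eq_zero (hv : IsNonarchimedean v)
    (hσv : ∀ x, v (σ x) = v x) (hp0 : (p : L) ≠ 0) (hσ : σ ^ p ^ n = 1) {Λ : ℝ} (hΛ : 0 ≤ Λ)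
    (hlevel : ∀ m, 1 ≤ m → m ≤ n → ∀ z, v (levelTrace p n σ m z) ≤ Λ * v z)
    {x : L} (hx : levelTrace p n σ 0 x = 0) : v (p * x) ≤ Λ * v (σ x - x) := by
  set y := σ x - x
  have hy : ∀ m ≤ n, v (levelTrace p n σ m y) ≤ Λ * v y := by
    intro m hm
    rcases Nat.eq_zero_or_pos m with rfl | hm0
    · simp [y, map_sub, levelTrace_map, hx, mul_nonneg hΛ (v.nonneg y)]
    · exact hlevel m hm0 hm y
  have hpiece : ∀ m < n,
      v (p * (levelTrace p n σ (m + 1) x - levelTrace p n σ m x)) ≤ Λ * v y := by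
    intro m hm
    have htrace : orbitTrace σ (p ^ m) p
        (levelTrace p n σ (m + 1) x - levelTrace p n σ m x) = 0 := by
      rw [map_sub, orbitTrace_levelTrace_succ σ hp0 hm,
        orbitTrace_of_pow_apply_eq_self σ (pow_apply_levelTrace σ hσ hm.le x), sub_self]
    refine (abv_natCast_mul_le_of_orbitTrace_eq_zero hv hσv htrace).trans ?_
    rw [map_sub σ, ← levelTrace_map, ← levelTrace_map, sub_sub_sub_comm, ← map_sub, ← map_sub]
    exact (hv.apply_sub_le _ _).trans (max_le (hy _ hm) (hy _ hm.le))
  have htelescope : (p : L) * x = ∑ m ∈ range n,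
      p * (levelTrace p n σ (m + 1) x - levelTrace p n σ m x) := by
    rw [← mul_sum, sum_range_sub (fun m => levelTrace p n σ m x), levelTrace_self_apply, hx,
      sub_zero]
  rw [htelescope]
  exact hv.apply_sum_le_of_forall_le (mul_nonneg hΛ (v.nonneg y)) fun m hm =>
    hpiece m (mem_range.mp hm)

end Estimates

theorem abv_le_of_normTrace_eq_zero {K L : Type*} [Field K] [Field L] [Algebra K L]
    {v : AbsoluteValue L ℝ} (hv : IsNonarchimedean v) {σ : L ≃ₐ[K] L}
    (hσv : ∀ x, v (σ x) = v x) {p n : ℕ} (hp : 1 < p) (hp0 : (p : L) ≠ 0) (hσ : σ ^ p ^ n = 1)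
    (hstep : ∀ k < n, ∀ w, (σ ^ p ^ (k + 1)) w = w →
      v (orbitTrace σ (p ^ k) p w) ≤ v p ^ (1 - 1 / (p : ℝ) ^ (k + 1)) * v w)
    {x : L} (hx : normTrace p n σ x = 0) :
    v x ≤ v p ^ (-(1 + ((p : ℝ) * (p - 1))⁻¹)) * v (σ x - x) := by
  have hvp0 : 0 < v p := v.pos hp0
  have hvp1 : v p ≤ 1 := hv.apply_natCast_le_one
  have hp1 : (0 : ℝ) < p - 1 := sub_pos.mpr (by exact_mod_cast hp)
  have hlevel : ∀ m, 1 ≤ m → m ≤ n → ∀ z,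
      v (levelTrace p n σ m z) ≤ v p ^ (-((p : ℝ) * (p - 1))⁻¹) * v z := by
    intro m hm hmn z
    refine (abv_levelTrace_le hp hp0 hvp1 hσ hstep z hmn).trans ?_
    gcongr ?_ * _
    refine Real.rpow_le_rpow_of_exponent_ge hvp0 hvp1 (neg_le_neg ?_)
    rw [← one_div]
    gcongr
    exact le_self_pow₀ (by exact_mod_cast hp.le) (by omega)
  have hpx := abv_natCast_mul_le_of_levelTrace_eq_zero hv hσv hp0 hσ (by positivity) hlevel
    (by rwa [levelTrace_zero_apply])
  rw [map_mul] at hpx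
  calc v x = (v p)⁻¹ * (v p * v x) := by field_simp
    _ ≤ (v p)⁻¹ * (v p ^ (-((p : ℝ) * (p - 1))⁻¹) * v (σ x - x)) := by gcongr
    _ = v p ^ (-(1 + ((p : ℝ) * (p - 1))⁻¹)) * v (σ x - x) := by
      rw [← mul_assoc, ← Real.rpow_neg_one, ← Real.rpow_add hvp0, neg_add]

theorem existsUnique_normTrace_eq_zero_and_sub_algebraMap_mul_eq {K L : Type*} [Field K]
    [Field L] [Algebra K L] [FiniteDimensional K L] {p n : ℕ} (σ : L ≃ₐ[K] L) (lam : K)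
    (hinj : ∀ x, normTrace p n σ x = 0 → σ x - algebraMap K L lam * x = 0 → x = 0)
    {y : L} (hy : normTrace p n σ y = 0) :
    ∃! x, normTrace p n σ x = 0 ∧ σ x - algebraMap K L lam * x = y := by
  let f : L →ₗ[K] L := σ.toLinearMap - lam • LinearMap.id
  have hf : ∀ x, f x = σ x - algebraMap K L lam * x := fun x => by simp [f, Algebra.smul_def]
  have hmem : ∀ x, x ∈ LinearMap.ker (levelTrace p n σ 0) ↔ normTrace p n σ x = 0 := fun x => by
    rw [LinearMap.mem_ker, levelTrace_zero_apply]
  have hmaps : ∀ x ∈ LinearMap.ker (levelTrace p n σ 0),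
      f x ∈ LinearMap.ker (levelTrace p n σ 0) := by
    intro x hx
    rw [hmem] at hx ⊢
    rw [hf, normTrace_sub_algebraMap_mul, hx, map_zero, mul_zero, sub_zero]
  simpa only [hmem, hf] using f.existsUnique_apply_eq_of_mapsTo hmaps
    (fun x hx hfx => hinj x ((hmem x).mp hx) ((hf x).symm.trans hfx)) ((hmem y).mpr hy)

theorem sigma_sub_lambda_bijective_on_trace_zero_general
    (p n : ℕ) (hp : p.Prime)
    (K L : Type*) [Field K] [Field L] [CharZero L] [Algebra K L]
    [FiniteDimensional K L]
    (σ : L ≃ₐ[K] L) (hσ : orderOf σ = p ^ n)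
    (D : LocalFieldData p L)
    (hinv : ∀ x : L, D.a (σ x) = D.a x)
    (ϖ : ℕ → L)
    (hϖmem : ∀ m ≤ n, (σ ^ p ^ m) (ϖ m) = ϖ m)
    (hϖpos : ∀ m ≤ n, 0 < D.a (ϖ m))
    (hϖ1 : ∀ m ≤ n, D.a (ϖ m) < 1)
    (hdisc : ∀ m ≤ n, ∀ x : L, (σ ^ p ^ m) x = x → x ≠ 0 → ∃ k : ℤ, D.a x = D.a (ϖ m) ^ k)
    (e : ℕ) (he : D.a ((p : L)) = D.a (ϖ 0) ^ e)
    (htot : ∀ m : ℕ, 1 ≤ m → m ≤ n → D.a (ϖ (m - 1)) = D.a (ϖ m) ^ p)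
    (hdiff : ∀ m : ℕ, 1 ≤ m → m ≤ n → ∃ dd : ℕ,
      ((e : ℝ) * ((p : ℝ) ^ m - 1) + ((p : ℝ) - 1) ≤ (dd : ℝ)) ∧
      ∀ x : L, (σ ^ p ^ m) x = x →
        ((∀ y : L, (σ ^ p ^ m) y = y → D.a y ≤ 1 →
            D.a (∑ j ∈ Finset.range p, (σ ^ (p ^ (m - 1) * j)) (x * y)) ≤ 1) ↔
          D.a x ≤ D.a (ϖ m) ^ (-(dd : ℤ))))
    (lam : K)
    -- `v(λ - 1) ≥ 2`
    (hlam : D.a (algebraMap K L lam - 1) ≤ D.a ((p : L)) ^ (2 : ℕ)) :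
    (∀ x : L, normTrace p n σ x = 0 →
        normTrace p n σ (σ x - algebraMap K L lam * x) = 0) ∧
      (∀ y : L, normTrace p n σ y = 0 →
        ∃! x : L, normTrace p n σ x = 0 ∧ σ x - algebraMap K L lam * x = y) ∧
      (∀ x y : L, normTrace p n σ x = 0 → normTrace p n σ y = 0 →
        σ x - algebraMap K L lam * x = y →
        D.a x ≤ D.a ((p : L)) ^ (-(1 + ((p : ℝ) * ((p : ℝ) - 1))⁻¹)) * D.a y) := by
  set v := D.abv
  have hv : IsNonarchimedean v := D.isNonarchimedean_abv
  have hp0 : (p : L) ≠ 0 := Nat.cast_ne_zero.mpr hp.ne_zero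
  have hdiff' : ∀ m, 1 ≤ m → m ≤ n → ∃ dd : ℕ, (e : ℝ) * ((p : ℝ) ^ m - 1) + (p - 1) ≤ dd ∧
      ∀ x, (σ ^ p ^ m) x = x → v x ≤ v (ϖ m) ^ (-(dd : ℤ)) →
        v (orbitTrace σ (p ^ (m - 1)) p x) ≤ 1 := fun m hm hmn =>
    (hdiff m hm hmn).imp fun _ ⟨hdd, hinvDiff⟩ => ⟨hdd, fun x hx hxd => by
      have htrace := (hinvDiff x hx).2 hxd 1 (map_one _) v.map_one.le
      simp only [mul_one] at htrace
      rwa [orbitTrace_apply]⟩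
  have hcore (x : L) (hx : normTrace p n σ x = 0) :=
    abv_le_of_normTrace_eq_zero hv hinv hp.one_lt hp0 (hσ ▸ pow_orderOf_eq_one σ)
      (fun _ hk _ hw => abv_orbitTrace_le_of_tower v σ hp.pos ϖ hϖmem hϖpos hϖ1 hdisc he htot
        hdiff' hk hw) hx
  have hδ : ((p : ℝ) * (p - 1))⁻¹ < 1 := by
    have hp2 : (2 : ℝ) ≤ p := by exact_mod_cast hp.two_le
    exact inv_lt_one_of_one_lt₀ (by nlinarith)
  have hbound (x : L) (hx : normTrace p n σ x = 0) :
      v x ≤ v p ^ (-(1 + ((p : ℝ) * (p - 1))⁻¹)) * v (σ x - algebraMap K L lam * x) := by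
    refine abv_le_of_abv_le_abv_sub hv (μ := v p ^ 2) (by positivity) ?_ (hcore x hx) hlam
    rw [← Real.rpow_natCast, ← Real.rpow_add (v.pos hp0)]
    exact Real.rpow_lt_one (v.nonneg _) D.res_char (by push_cast; linarith)
  refine ⟨fun x hx => by simp [normTrace_sub_algebraMap_mul, hx], fun y hy => ?_,
    fun x y hx _ hxy => hxy ▸ hbound x hx⟩
  refine existsUnique_normTrace_eq_zero_and_sub_algebraMap_mul_eq σ lam (fun x hx hx0 => ?_) hy
  simpa [hx0] using hbound x hx

/-- With `K = K_0 ⊂ ⋯ ⊂ K_n = L` a sufficiently ramified tower of local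
fields of characteristic `(0,p)`, `Gal(K_n/K)` cyclic of order `pⁿ` generated by `σ`,
`K_m` the fixed field of `σ^(p^m)`, `t = p⁻ⁿ tr_{K_n/K}` the normalized trace, and
`K_n^{t=0} = {x : t x = 0}`:  for `λ ∈ ℤ_p` (viewed in `K`, i.e. a limit of integers)
with `v(λ - 1) ≥ 2`, the `K`-linear operator `σ - λ` maps `K_n^{t=0}` bijectively onto
itself, and the unique solution `x ∈ K_n^{t=0}` of `σ x - λ x = y` (for `y ∈ K_n^{t=0}`)
satisfies `v(x) ≥ v(y) - 1 - 1/(p(p-1))`, i.e. `|x| ≤ |p| ^ (-(1 + 1/(p(p-1)))) * |y|`. -/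
theorem sigma_sub_lambda_bijective_on_trace_zero
    (p n : ℕ) (hp : p.Prime) (hn : 1 ≤ n)
    (K L : Type*) [Field K] [Field L] [CharZero K] [CharZero L] [Algebra K L]
    [IsGalois K L] [FiniteDimensional K L]
    (hdeg : Module.finrank K L = p ^ n)
    (σ : L ≃ₐ[K] L) (hσ : orderOf σ = p ^ n)
    (D : LocalFieldData p L)
    (hinv : ∀ x : L, D.a (σ x) = D.a x)
    (ϖ : ℕ → L)
    (hϖmem : ∀ m ≤ n, (σ ^ p ^ m) (ϖ m) = ϖ m)
    (hϖpos : ∀ m ≤ n, 0 < D.a (ϖ m))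
    (hϖ1 : ∀ m ≤ n, D.a (ϖ m) < 1)
    (hdisc : ∀ m ≤ n, ∀ x : L, (σ ^ p ^ m) x = x → x ≠ 0 → ∃ k : ℤ, D.a x = D.a (ϖ m) ^ k)
    (e : ℕ) (he1 : 1 ≤ e) (he : D.a ((p : L)) = D.a (ϖ 0) ^ e)
    (htot : ∀ m : ℕ, 1 ≤ m → m ≤ n → D.a (ϖ (m - 1)) = D.a (ϖ m) ^ p)
    (hdiff : ∀ m : ℕ, 1 ≤ m → m ≤ n → ∃ dd : ℕ,
      ((e : ℝ) * ((p : ℝ) ^ m - 1) + ((p : ℝ) - 1) ≤ (dd : ℝ)) ∧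
      ∀ x : L, (σ ^ p ^ m) x = x →
        ((∀ y : L, (σ ^ p ^ m) y = y → D.a y ≤ 1 →
            D.a (∑ j ∈ Finset.range p, (σ ^ (p ^ (m - 1) * j)) (x * y)) ≤ 1) ↔
          D.a x ≤ D.a (ϖ m) ^ (-(dd : ℤ))))
    -- `λ` is an element of `ℤ_p ⊆ 𝒪_K`, i.e. a limit of (the images of) rational integers
    (lam : K)
    (hlam_int : ∀ ε : ℝ, 0 < ε → ∃ m : ℤ, D.a (algebraMap K L lam - (m : L)) < ε)
    -- `v(λ - 1) ≥ 2`
    (hlam : D.a (algebraMap K L lam - 1) ≤ D.a ((p : L)) ^ (2 : ℕ)) :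
    (∀ x : L, normTrace p n σ x = 0 →
        normTrace p n σ (σ x - algebraMap K L lam * x) = 0) ∧
      (∀ y : L, normTrace p n σ y = 0 →
        ∃! x : L, normTrace p n σ x = 0 ∧ σ x - algebraMap K L lam * x = y) ∧
      (∀ x y : L, normTrace p n σ x = 0 → normTrace p n σ y = 0 →
        σ x - algebraMap K L lam * x = y →
        D.a x ≤ D.a ((p : L)) ^ (-(1 + ((p : ℝ) * ((p : ℝ) - 1))⁻¹)) * D.a y) :=
  sigma_sub_lambda_bijective_on_trace_zero_general p n hp K L σ hσ D hinv ϖ hϖmem hϖpos hϖ1 hdisc e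
    he htot hdiff lam hlam
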